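/- For all natural numbers M ≥ 2, K ≥ 1, L ≥ 1, the number of unordered pairs of distinct vertices of the spider graph Sp(M,K,L) at graph distance exactly 2L + 1 equals M·K²(M−1)/2, and for every j ≥ 2L + 2 there are no pairs of vertices at graph distance exactly j. -/

import Mathlib

/-- Vertices of the spider graph `Sp(M,K,L)`: `M` core vertices plus
leg vertices `v_{m,k,ℓ}` for `m < M`, `k < K`, `ℓ < L`. -/
abbrev SpiderVertex (M K L : ℕ) := Fin M ⊕ (Fin M × Fin K × Fin L)

/-- Base relation generating the edges of the spider graph. -/
def spiderRel (M K L : ℕ) : SpiderVertex M K L → SpiderVertex M K L → Prop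
  | Sum.inl _, Sum.inl _ => True
  | Sum.inl m, Sum.inr (m', _, l) => m = m' ∧ (l : ℕ) = 0
  | Sum.inr _, Sum.inl _ => False
  | Sum.inr (m, k, l), Sum.inr (m', k', l') =>
      m = m' ∧ k = k' ∧ (l : ℕ) + 1 = (l' : ℕ)

/-- The spider graph `Sp(M,K,L)`. -/
def spiderGraph (M K L : ℕ) : SimpleGraph (SpiderVertex M K L) :=
  SimpleGraph.fromRel (spiderRel M K L)

instance (M K L : ℕ) : DecidableRel (spiderRel M K L) := fun x y =>
  match x, y with
  | Sum.inl _, Sum.inl _ => inferInstanceAs (Decidable True)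
  | Sum.inl m, Sum.inr (m', _, l) => inferInstanceAs (Decidable (m = m' ∧ (l : ℕ) = 0))
  | Sum.inr _, Sum.inl _ => inferInstanceAs (Decidable False)
  | Sum.inr (m, k, l), Sum.inr (m', k', l') =>
      inferInstanceAs (Decidable (m = m' ∧ k = k' ∧ (l : ℕ) + 1 = (l' : ℕ)))

instance (M K L : ℕ) : DecidableRel (spiderGraph M K L).Adj := fun x y =>
  inferInstanceAs (Decidable (x ≠ y ∧ (spiderRel M K L x y ∨ spiderRel M K L y x)))

/-- `alphaSpider M K L j` is the number of unordered pairs of distinct vertices of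
`Sp(M,K,L)` at graph distance exactly `j`. -/
noncomputable def alphaSpider (M K L j : ℕ) : ℕ :=
  Nat.card {p : Sym2 (SpiderVertex M K L) //
    ¬ p.IsDiag ∧ ∀ u v : SpiderVertex M K L, p = s(u, v) →
      (spiderGraph M K L).dist u v = j}

/-!
Write `h(v)` for the height of a vertex above its core vertex (`0` for `c_m`, `ℓ + 1` for
`v_{m,k,ℓ}`). Two vertices are at distance `|h(u) - h(v)|` if they lie on a common leg,
`h(u) + h(v)` if they hang from the same core vertex but lie on different legs, and
`h(u) + h(v) + 1` otherwise, the extra edge crossing the clique. The obvious walks show that this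
formula bounds the distance from above; it changes by at most one along an edge, which bounds the
distance from below. Since heights are at most `L`, the formula never exceeds `2L + 1`, with
equality exactly for the `M(M-1)K²` ordered pairs of leg tips on different cores.
-/

open Finset

namespace SimpleGraph

variable {V : Type*} (G : SimpleGraph V)

theorem dist_eq_of_edist_le_of_adj {d : V → V → ℕ} (hd_self : ∀ v, d v v = 0)
    (hd_adj : ∀ ⦃u x⦄, G.Adj u x → ∀ w, d u w ≤ d x w + 1)
    (hd_edist : ∀ u v, G.edist u v ≤ d u v) (u v : V) : G.dist u v = d u v := by
  have hr : G.Reachable u v :=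
    edist_ne_top_iff_reachable.1 (ne_top_of_le_ne_top (ENat.natCast_ne_top _) (hd_edist u v))
  refine le_antisymm (by exact_mod_cast hr.coe_dist_eq_edist ▸ hd_edist u v) ?_
  obtain ⟨p, hp⟩ := hr.exists_walk_length_eq_dist
  rw [← hp]
  clear hp hr
  induction p with
  | nil => simp [hd_self]
  | cons h p ih => exact (hd_adj h _).trans (by simpa using ih)

theorem two_mul_card_sym2_dist_eq [Fintype V] [DecidableEq V] (j : ℕ) :
    2 * Nat.card {p : Sym2 V // ¬p.IsDiag ∧ ∀ u v, p = s(u, v) → G.dist u v = j} =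
      #{p : V × V | p.1 ≠ p.2 ∧ G.dist p.1 p.2 = j} := by
  classical
  let H := fromRel fun u v ↦ G.dist u v = j
  have hmem (p : Sym2 V) :
      (¬p.IsDiag ∧ ∀ u v, p = s(u, v) → G.dist u v = j) ↔ p ∈ H.edgeSet := by
    induction p using Sym2.ind with
    | _ a b =>
      simp only [H, mem_edgeSet, fromRel_adj, G.dist_comm (u := b), or_self, Sym2.mk_isDiag_iff]
      refine and_congr_right fun _ ↦ ⟨fun h ↦ h a b rfl, ?_⟩
      rintro h u v huv
      rcases Sym2.eq_iff.1 huv with ⟨rfl, rfl⟩ | ⟨rfl, rfl⟩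
      exacts [h, G.dist_comm ▸ h]
  rw [Nat.card_congr (Equiv.subtypeEquivRight hmem), Nat.card_eq_fintype_card,
    ← Set.toFinset_card, ← edgeFinset, ← dart_card_eq_twice_card_edges,
    ← Fintype.card_subtype]
  exact Fintype.card_congr ⟨fun d ↦ ⟨d.toProd, by simpa [H, dist_comm] using d.adj⟩,
    fun p ↦ ⟨p.1, by simpa [H, dist_comm] using p.2⟩, fun _ ↦ rfl, fun _ ↦ rfl⟩

end SimpleGraph

namespace SpiderVertex

variable {M K L : ℕ}

def core : SpiderVertex M K L → Fin M
  | .inl m => m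
  | .inr (m, _, _) => m

def leg : SpiderVertex M K L → Option (Fin K)
  | .inl _ => none
  | .inr (_, k, _) => some k

def height : SpiderVertex M K L → ℕ
  | .inl _ => 0
  | .inr (_, _, l) => l + 1

theorem height_le (v : SpiderVertex M K L) : v.height ≤ L := by
  rcases v with _ | ⟨_, _, l⟩
  exacts [Nat.zero_le _, l.isLt]

end SpiderVertex

open SpiderVertex

def spiderDist {M K L : ℕ} (u v : SpiderVertex M K L) : ℕ :=
  if u.core = v.core then
    if u.leg = v.leg then Nat.dist u.height v.height else u.height + v.height
  else u.height + v.height + 1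

theorem spiderDist_le {M K L : ℕ} (u v : SpiderVertex M K L) : spiderDist u v ≤ 2 * L + 1 := by
  have := u.height_le; have := v.height_le
  unfold spiderDist Nat.dist; split_ifs <;> omega

theorem spiderDist_eq_iff {M K L : ℕ} {u v : SpiderVertex M K L} :
    spiderDist u v = 2 * L + 1 ↔ u.core ≠ v.core ∧ u.height = L ∧ v.height = L := by
  have := u.height_le; have := v.height_le
  unfold spiderDist Nat.dist; split_ifs <;> omega

theorem card_spiderDist_eq (M K n : ℕ) :
    #{p : SpiderVertex M K (n + 1) × SpiderVertex M K (n + 1) |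
      p.1 ≠ p.2 ∧ spiderDist p.1 p.2 = 2 * (n + 1) + 1} = (M * M - M) * (K * K) := by
  let tips (p : (Fin M × Fin M) × (Fin K × Fin K)) :
      SpiderVertex M K (n + 1) × SpiderVertex M K (n + 1) :=
    (.inr (p.1.1, p.2.1, Fin.last n), .inr (p.1.2, p.2.2, Fin.last n))
  have : ({p | p.1 ≠ p.2 ∧ spiderDist p.1 p.2 = 2 * (n + 1) + 1} : Finset _) =
      (univ.offDiag ×ˢ univ).image tips := by
    ext ⟨u | ⟨m, k, l⟩, v | ⟨m', k', l'⟩⟩ <;>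
      simp [spiderDist_eq_iff, core, height, tips, Fin.ext_iff]
    grind
  rw [this, card_image_of_injective _ (fun p q h ↦ by grind), card_product, offDiag_card]
  simp

namespace spiderGraph

variable {M K L : ℕ}

open SimpleGraph

theorem adj_inl_inl {m m' : Fin M} :
    (spiderGraph M K L).Adj (.inl m) (.inl m') ↔ m ≠ m' := by
  simp [spiderGraph, spiderRel]

theorem adj_inl_inr {m : Fin M} {k : Fin K} {l : Fin L} (hl : (l : ℕ) = 0) :
    (spiderGraph M K L).Adj (.inl m) (.inr (m, k, l)) := by
  simp [spiderGraph, spiderRel, hl]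

theorem adj_inr_inr {m : Fin M} {k : Fin K} {l l' : Fin L} (hl : (l : ℕ) + 1 = l') :
    (spiderGraph M K L).Adj (.inr (m, k, l)) (.inr (m, k, l')) :=
  ⟨fun h ↦ by cases h; omega, Or.inl ⟨rfl, rfl, hl⟩⟩

theorem spiderDist_le_of_adj {u x : SpiderVertex M K L} (h : (spiderGraph M K L).Adj u x)
    (w : SpiderVertex M K L) : spiderDist u w ≤ spiderDist x w + 1 := by
  rcases u with m | ⟨m, k, l⟩ <;> rcases x with m' | ⟨m', k', l'⟩ <;>
    rcases w with m'' | ⟨m'', k'', l''⟩ <;>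
    simp only [spiderGraph, fromRel_adj, spiderRel] at h <;>
    simp only [spiderDist, core, leg, height, Nat.dist] <;> split_ifs <;> grind

theorem edist_inr_inr_le (m : Fin M) (k : Fin K) {l l' : Fin L} {d : ℕ}
    (hd : (l' : ℕ) = l + d) :
    (spiderGraph M K L).edist (.inr (m, k, l)) (.inr (m, k, l')) ≤ d := by
  set G := spiderGraph M K L
  induction d generalizing l' with
  | zero => simp [Fin.ext hd]
  | succ d ih =>
    let l'' : Fin L := ⟨l + d, by omega⟩
    calc G.edist (.inr (m, k, l)) (.inr (m, k, l'))
        ≤ G.edist (.inr (m, k, l)) (.inr (m, k, l'')) +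
          G.edist (.inr (m, k, l'')) (.inr (m, k, l')) := G.edist_triangle
      _ ≤ d + 1 := add_le_add (ih rfl) (edist_eq_one_iff_adj.2 (adj_inr_inr (by grind))).le
      _ = ↑(d + 1) := by push_cast; rfl

theorem edist_le_height (v : SpiderVertex M K L) :
    (spiderGraph M K L).edist (.inl v.core) v ≤ v.height := by
  set G := spiderGraph M K L
  rcases v with m | ⟨m, k, l⟩
  · simp [core]
  · let l₀ : Fin L := ⟨0, l.pos⟩
    calc G.edist (.inl m) (.inr (m, k, l))
        ≤ G.edist (.inl m) (.inr (m, k, l₀)) + G.edist (.inr (m, k, l₀)) (.inr (m, k, l)) :=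
          G.edist_triangle
      _ ≤ 1 + l := add_le_add (edist_eq_one_iff_adj.2 (adj_inl_inr rfl)).le
          (edist_inr_inr_le m k (by simp [l₀]))
      _ = _ := by simp [height, add_comm]

theorem edist_le_spiderDist (u v : SpiderVertex M K L) :
    (spiderGraph M K L).edist u v ≤ spiderDist u v := by
  set G := spiderGraph M K L
  have via_core : G.edist u v ≤ u.height + (G.edist (.inl u.core) (.inl v.core) + v.height) :=
    calc G.edist u v ≤ G.edist u (.inl u.core) + G.edist (.inl u.core) v := G.edist_triangle
      _ ≤ G.edist u (.inl u.core) +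
          (G.edist (.inl u.core) (.inl v.core) + G.edist (.inl v.core) v) := by
        gcongr; exact G.edist_triangle
      _ ≤ _ := by
        rw [G.edist_comm (u := u)]
        gcongr
        exacts [edist_le_height u, edist_le_height v]
  unfold spiderDist
  split_ifs with hcore hleg
  · rcases u with m | ⟨m, k, l⟩ <;> rcases v with m' | ⟨m', k', l'⟩ <;>
      simp only [core, leg, reduceCtorEq, Option.some.injEq] at hcore hleg
    · simp [hcore]
    · subst hcore hleg
      rcases le_total l l' with h | h
      · exact (edist_inr_inr_le m k (d := l' - l) (by omega)).trans
          (Nat.cast_le.2 (by simp [height, Nat.dist]))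
      · rw [G.edist_comm]
        exact (edist_inr_inr_le m k (d := l - l') (by omega)).trans
          (Nat.cast_le.2 (by simp [height, Nat.dist]))
  · simpa [hcore] using via_core
  · rw [edist_eq_one_iff_adj.2 (adj_inl_inl.2 hcore)] at via_core
    simpa [add_right_comm, add_assoc] using via_core

theorem dist_eq_spiderDist (u v : SpiderVertex M K L) :
    (spiderGraph M K L).dist u v = spiderDist u v :=
  dist_eq_of_edist_le_of_adj _ (fun _ ↦ by simp [spiderDist])
    (fun _ _ ↦ spiderDist_le_of_adj) edist_le_spiderDist u v

end spiderGraph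

theorem two_mul_alphaSpider (M K L j : ℕ) :
    2 * alphaSpider M K L j =
      #{p : SpiderVertex M K L × SpiderVertex M K L | p.1 ≠ p.2 ∧ spiderDist p.1 p.2 = j} := by
  rw [alphaSpider, SimpleGraph.two_mul_card_sym2_dist_eq]
  simp only [spiderGraph.dist_eq_spiderDist]

theorem spider_alpha_max_general (M K L : ℕ) (hL : 1 ≤ L) :
    alphaSpider M K L (2 * L + 1) = M * K ^ 2 * (M - 1) / 2 ∧
    ∀ j : ℕ, 2 * L + 2 ≤ j → alphaSpider M K L j = 0 := by
  obtain ⟨n, rfl⟩ := Nat.exists_eq_add_of_le' hL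
  refine ⟨?_, fun j hj ↦ ?_⟩
  · have h := two_mul_alphaSpider M K (n + 1) (2 * (n + 1) + 1)
    rw [card_spiderDist_eq] at h
    have : M * K ^ 2 * (M - 1) = (M * M - M) * (K * K) := by rw [← Nat.mul_sub_one]; ring
    omega
  · have h := two_mul_alphaSpider M K (n + 1) j
    rw [card_eq_zero.2 (filter_eq_empty_iff.2 fun p _ ⟨_, hp⟩ ↦ by
      have := spiderDist_le p.1 p.2; omega)] at h
    omega

/-- For all `M ≥ 2`, `K ≥ 1`, `L ≥ 1`, the number of unordered pairs of
distinct vertices of `Sp(M,K,L)` at distance exactly `2L + 1` equals `M·K²(M−1)/2`, and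
for every `j ≥ 2L + 2` there are no pairs of vertices at distance exactly `j`. -/
theorem spider_alpha_max (M K L : ℕ) (hM : 2 ≤ M) (hK : 1 ≤ K) (hL : 1 ≤ L) :
    alphaSpider M K L (2 * L + 1) = M * K ^ 2 * (M - 1) / 2 ∧
    ∀ j : ℕ, 2 * L + 2 ≤ j → alphaSpider M K L j = 0 :=
  spider_alpha_max_general M K L hL
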